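/- Let {xᵏ} be a sequence of feasible points converging to x̄ ∈ [l,u], and let i be a fixed index such that i ∈ N(xᵏ) for all k and x̄_i = l_i. Then g_i(x̄) ≤ 0. Analogously, if i ∈ N(xᵏ) for all k and x̄_i = u_i, then g_i(x̄) ≥ 0. -/

import Mathlib

open Finset

/-- The gradient of `f` at `x`: its `i`-th component is the partial derivative of `f`
in the `i`-th coordinate direction (the Euclidean gradient). -/
noncomputable def grad {n : ℕ} (f : (Fin n → ℝ) → ℝ) (x : Fin n → ℝ) (i : Fin n) : ℝ :=
  fderiv ℝ f x (Pi.single i 1)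

/-- The multiplier function `λ_i(x)`. -/
noncomputable def lamMul {n : ℕ} (f : (Fin n → ℝ) → ℝ) (l u x : Fin n → ℝ) (i : Fin n) : ℝ :=
  (u i - x i) ^ 2 / ((l i - x i) ^ 2 + (u i - x i) ^ 2) * grad f x i

/-- The multiplier function `μ_i(x)`. -/
noncomputable def muMul {n : ℕ} (f : (Fin n → ℝ) → ℝ) (l u x : Fin n → ℝ) (i : Fin n) : ℝ :=
  -((l i - x i) ^ 2 / ((l i - x i) ^ 2 + (u i - x i) ^ 2) * grad f x i)

/-- The estimate `A_l(x)` of the variables active at the lower bound. -/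
def estAl {n : ℕ} (f : (Fin n → ℝ) → ℝ) (l u : Fin n → ℝ) (ε : ℝ) (x : Fin n → ℝ) :
    Set (Fin n) :=
  {i | l i ≤ x i ∧ x i ≤ l i + ε * lamMul f l u x i ∧ 0 < grad f x i}

/-- The estimate `A_u(x)` of the variables active at the upper bound. -/
def estAu {n : ℕ} (f : (Fin n → ℝ) → ℝ) (l u : Fin n → ℝ) (ε : ℝ) (x : Fin n → ℝ) :
    Set (Fin n) :=
  {i | u i - ε * muMul f l u x i ≤ x i ∧ x i ≤ u i ∧ grad f x i < 0}

/-- The estimate `N(x)` of the non-active variables. -/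
def estN {n : ℕ} (f : (Fin n → ℝ) → ℝ) (l u : Fin n → ℝ) (ε : ℝ) (x : Fin n → ℝ) :
    Set (Fin n) :=
  {i | i ∉ estAl f l u ε x ∧ i ∉ estAu f l u ε x}

/-- Componentwise projection onto the box `[l, u]`. -/
def projBox {n : ℕ} (l u y : Fin n → ℝ) : Fin n → ℝ :=
  fun i => min (u i) (max (l i) (y i))

/-- First-order optimality (stationarity) conditions at a feasible point. -/
def IsStationaryBox {n : ℕ} (f : (Fin n → ℝ) → ℝ) (l u x : Fin n → ℝ) : Prop :=
  ∀ i, (x i = l i → 0 ≤ grad f x i) ∧ (x i = u i → grad f x i ≤ 0) ∧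
    (l i < x i → x i < u i → grad f x i = 0)

/-!
At a point with `x̄ᵢ = lᵢ` the weight in `λᵢ` equals `1`, and it is continuous since `lᵢ ≠ uᵢ`;
hence `λᵢ(x) → gᵢ(x̄)`. If `gᵢ(x̄) > 0`, then near `x̄` both `gᵢ(x) > 0` and
`xᵢ < lᵢ + ε λᵢ(x)` hold, so `i ∈ A_l(xᵏ)` for large `k`. The upper bound is symmetric,
with `μᵢ(x) → -gᵢ(x̄)`.
-/

section

variable {n : ℕ} {f : (Fin n → ℝ) → ℝ} {l u : Fin n → ℝ} {i : Fin n}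

theorem continuous_grad (hf : ContDiff ℝ 1 f) (i : Fin n) : Continuous (fun x => grad f x i) :=
  (hf.continuous_fderiv one_ne_zero).clm_apply continuous_const

theorem sq_sub_add_sq_sub_ne_zero {a b : ℝ} (hab : a ≠ b) (x : ℝ) :
    (a - x) ^ 2 + (b - x) ^ 2 ≠ 0 := by
  intro h
  rw [add_eq_zero_iff_of_nonneg (sq_nonneg _) (sq_nonneg _), sq_eq_zero_iff, sq_eq_zero_iff,
    sub_eq_zero, sub_eq_zero] at h
  exact hab (h.1.trans h.2.symm)

theorem continuous_lamMul (hf : ContDiff ℝ 1 f) (hlu : l i ≠ u i) :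
    Continuous (fun x => lamMul f l u x i) := by
  unfold lamMul
  exact (((continuous_const.sub (continuous_apply i)).pow 2).div (by fun_prop)
    fun x => sq_sub_add_sq_sub_ne_zero hlu (x i)).mul (continuous_grad hf i)

theorem continuous_muMul (hf : ContDiff ℝ 1 f) (hlu : l i ≠ u i) :
    Continuous (fun x => muMul f l u x i) := by
  unfold muMul
  exact ((((continuous_const.sub (continuous_apply i)).pow 2).div (by fun_prop)
    fun x => sq_sub_add_sq_sub_ne_zero hlu (x i)).mul (continuous_grad hf i)).neg

theorem lamMul_of_eq_lower {x : Fin n → ℝ} (hlu : l i ≠ u i) (hx : x i = l i) :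
    lamMul f l u x i = grad f x i := by
  have : u i - l i ≠ 0 := sub_ne_zero.mpr hlu.symm
  simp [lamMul, hx, this]

theorem muMul_of_eq_upper {x : Fin n → ℝ} (hlu : l i ≠ u i) (hx : x i = u i) :
    muMul f l u x i = -grad f x i := by
  have : l i - u i ≠ 0 := sub_ne_zero.mpr hlu
  simp [muMul, hx, this]

theorem eventually_mem_estAl (hf : ContDiff ℝ 1 f) (hlu : l i ≠ u i) {ε : ℝ} (hε : 0 < ε)
    {xbar : Fin n → ℝ} (hl : xbar i = l i) (hg : 0 < grad f xbar i) :
    ∀ᶠ x in nhds xbar, l i ≤ x i → i ∈ estAl f l u ε x := by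
  have hgap : 0 < l i + ε * lamMul f l u xbar i - xbar i := by
    rw [lamMul_of_eq_lower hlu hl, hl]
    linarith [mul_pos hε hg]
  have hgap_cont : Continuous (fun x => l i + ε * lamMul f l u x i - x i) :=
    (continuous_const.add (continuous_const.mul (continuous_lamMul hf hlu))).sub
      (continuous_apply i)
  filter_upwards [hgap_cont.continuousAt.eventually (eventually_gt_nhds hgap),
    (continuous_grad hf i).continuousAt.eventually (eventually_gt_nhds hg)] with x hx hgx hlx
  exact ⟨hlx, by linarith, hgx⟩

theorem eventually_mem_estAu (hf : ContDiff ℝ 1 f) (hlu : l i ≠ u i) {ε : ℝ} (hε : 0 < ε)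
    {xbar : Fin n → ℝ} (hu : xbar i = u i) (hg : grad f xbar i < 0) :
    ∀ᶠ x in nhds xbar, x i ≤ u i → i ∈ estAu f l u ε x := by
  have hgap : 0 < xbar i - (u i - ε * muMul f l u xbar i) := by
    rw [muMul_of_eq_upper hlu hu, hu]
    linarith [mul_pos hε (neg_pos.mpr hg)]
  have hgap_cont : Continuous (fun x => x i - (u i - ε * muMul f l u x i)) :=
    (continuous_apply i).sub
      (continuous_const.sub (continuous_const.mul (continuous_muMul hf hlu)))
  filter_upwards [hgap_cont.continuousAt.eventually (eventually_gt_nhds hgap),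
    (continuous_grad hf i).continuousAt.eventually (eventually_lt_nhds hg)] with x hx hgx hux
  exact ⟨by linarith, hux, hgx⟩

end

theorem nonactive_limit_gradient_sign_general {n : ℕ} (f : (Fin n → ℝ) → ℝ) (hf : ContDiff ℝ 2 f)
    (l u : Fin n → ℝ) (hlu : ∀ i, l i < u i) (ε : ℝ) (hε : 0 < ε)
    (xk : ℕ → Fin n → ℝ) (hfeas : ∀ k i, l i ≤ xk k i ∧ xk k i ≤ u i)
    (xbar : Fin n → ℝ)
    (hconv : Filter.Tendsto xk Filter.atTop (nhds xbar))
    (i : Fin n) (hiN : ∀ k, i ∈ estN f l u ε (xk k)) :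
    (xbar i = l i → grad f xbar i ≤ 0) ∧ (xbar i = u i → 0 ≤ grad f xbar i) := by
  have hf1 : ContDiff ℝ 1 f := hf.of_le (by norm_num)
  constructor
  · intro hl
    by_contra! hg
    obtain ⟨k, hk⟩ := (hconv.eventually (eventually_mem_estAl hf1 (hlu i).ne hε hl hg)).exists
    exact (hiN k).1 (hk (hfeas k i).1)
  · intro hu
    by_contra! hg
    obtain ⟨k, hk⟩ := (hconv.eventually (eventually_mem_estAu hf1 (hlu i).ne hε hu hg)).exists
    exact (hiN k).2 (hk (hfeas k i).2)

/-- if an index stays in the non-active estimate along a convergent feasible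
sequence, then at a limit point lying at a bound the gradient has the appropriate sign. -/
theorem nonactive_limit_gradient_sign {n : ℕ} (f : (Fin n → ℝ) → ℝ) (hf : ContDiff ℝ 2 f)
    (l u : Fin n → ℝ) (hlu : ∀ i, l i < u i) (ε : ℝ) (hε : 0 < ε)
    (xk : ℕ → Fin n → ℝ) (hfeas : ∀ k i, l i ≤ xk k i ∧ xk k i ≤ u i)
    (xbar : Fin n → ℝ) (hxbar : ∀ i, l i ≤ xbar i ∧ xbar i ≤ u i)
    (hconv : Filter.Tendsto xk Filter.atTop (nhds xbar))
    (i : Fin n) (hiN : ∀ k, i ∈ estN f l u ε (xk k)) :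
    (xbar i = l i → grad f xbar i ≤ 0) ∧ (xbar i = u i → 0 ≤ grad f xbar i) :=
  nonactive_limit_gradient_sign_general f hf l u hlu ε hε xk hfeas xbar hconv i hiN
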